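/- Let E be a real inner product space and let x, y ∈ E with x ≠ 0, y ≠ 0 and ‖x − y‖ ≤ ‖y‖. Then the undirected angle θ ∈ [0, π] between x and y, defined by cos θ = ⟨x, y⟩ / (‖x‖·‖y‖), satisfies θ ≤ arcsin( ‖x − y‖ / ‖y‖ ) ≤ (π/2) · ‖x − y‖ / ‖y‖. -/

import Mathlib

open InnerProductGeometry

/-- If `x, y` are nonzero vectors in a real inner product space with
`‖x - y‖ ≤ ‖y‖`, then the undirected angle between `x` and `y` is at most
`arcsin(‖x - y‖ / ‖y‖)`, which in turn is at most `(π/2) ‖x - y‖ / ‖y‖`. -/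
theorem angle_le_arcsin_of_dist_le {E : Type*} [NormedAddCommGroup E]
    [InnerProductSpace ℝ E] (x y : E) (hx : x ≠ 0) (hy : y ≠ 0)
    (h : ‖x - y‖ ≤ ‖y‖) :
    InnerProductGeometry.angle x y ≤ Real.arcsin (‖x - y‖ / ‖y‖) ∧
      Real.arcsin (‖x - y‖ / ‖y‖) ≤ (Real.pi / 2) * (‖x - y‖ / ‖y‖) := by
  have ha : (0:ℝ) < ‖x‖ := norm_pos_iff.mpr hx
  have hb : (0:ℝ) < ‖y‖ := norm_pos_iff.mpr hy
  have hc0 : (0:ℝ) ≤ ‖x - y‖ := norm_nonneg _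
  have hd0 : (0:ℝ) ≤ ‖x - y‖ / ‖y‖ := div_nonneg hc0 hb.le
  have hd1 : ‖x - y‖ / ‖y‖ ≤ 1 := (div_le_one hb).mpr h
  constructor
  · have hsnn : 0 ≤ Real.sqrt (‖y‖^2 - ‖x - y‖^2) := Real.sqrt_nonneg _
    have hs : Real.sqrt (‖y‖^2 - ‖x - y‖^2) ^ 2 = ‖y‖^2 - ‖x - y‖^2 :=
      Real.sq_sqrt (by nlinarith)
    have key : Real.cos (Real.arcsin (‖x - y‖ / ‖y‖)) ≤
        Real.cos (InnerProductGeometry.angle x y) := by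
      rw [Real.cos_arcsin, InnerProductGeometry.cos_angle]
      have hinner : (inner ℝ x y : ℝ) = (‖x‖^2 + ‖y‖^2 - ‖x - y‖^2) / 2 := by
        have := norm_sub_sq_real x y; linarith
      have hsq : Real.sqrt (1 - (‖x - y‖ / ‖y‖)^2) =
          Real.sqrt (‖y‖^2 - ‖x - y‖^2) / ‖y‖ := by
        have e : 1 - (‖x - y‖ / ‖y‖)^2 = (‖y‖^2 - ‖x - y‖^2) / ‖y‖^2 := by
          field_simp
        rw [e, Real.sqrt_div (by nlinarith), Real.sqrt_sq hb.le]
      rw [hinner, hsq, div_le_div_iff₀ hb (by positivity)]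
      nlinarith [sq_nonneg (‖x‖ - Real.sqrt (‖y‖^2 - ‖x - y‖^2))]
    by_contra hlt
    push_neg at hlt
    have h1 : Real.arcsin (‖x - y‖ / ‖y‖) ∈ Set.Icc 0 Real.pi :=
      ⟨Real.arcsin_nonneg.mpr hd0,
        (Real.arcsin_le_pi_div_two _).trans (by linarith [Real.pi_pos])⟩
    have h2 : InnerProductGeometry.angle x y ∈ Set.Icc 0 Real.pi :=
      ⟨InnerProductGeometry.angle_nonneg x y, InnerProductGeometry.angle_le_pi x y⟩
    exact absurd key (not_le.mpr (Real.strictAntiOn_cos h1 h2 hlt))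
  · have h1 := Real.mul_le_sin (Real.arcsin_nonneg.mpr hd0)
      (Real.arcsin_le_pi_div_two _)
    rw [Real.sin_arcsin (by linarith) hd1] at h1
    have hpi : 0 < Real.pi := Real.pi_pos
    calc Real.arcsin (‖x - y‖ / ‖y‖)
        = (Real.pi / 2) * (2 / Real.pi * Real.arcsin (‖x - y‖ / ‖y‖)) := by
          field_simp
      _ ≤ (Real.pi / 2) * (‖x - y‖ / ‖y‖) := by
          apply mul_le_mul_of_nonneg_left h1 (by positivity)
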